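/- arXiv:2510.17665 — 4 statements merged into one kernel-verified Lean document; each statement's English description precedes it below -/
import Mathlib

section
/- Let H be a graph whose shortest odd cycle has length 2k+1 with k > 1, and let C be such a shortest odd cycle with vertices v₁, v₂, …, v_{2k+1} in cyclic order. Then every vertex v of H not on C has at most two neighbors among the vertices of C. -/
open SimpleGraph

/-- Let `H` be a graph whose shortest odd cycle has length `2k+1` with `k > 1`, given by
vertices `v 1, …, v (2k+1)` in cyclic order.  Then every vertex `x` of `H` not on the cycle
has at most two neighbors among the vertices of the cycle. -/
theorem shortest_odd_cycle_outside_vertex_at_most_two_neighbors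
    {V : Type*} (H : SimpleGraph V) (k : ℕ) (hk : 1 < k) (v : ℕ → V)
    (hinj : ∀ i j, 1 ≤ i → i ≤ 2 * k + 1 → 1 ≤ j → j ≤ 2 * k + 1 → v i = v j → i = j)
    (hadj : ∀ i, 1 ≤ i → i ≤ 2 * k → H.Adj (v i) (v (i + 1)))
    (hclose : H.Adj (v (2 * k + 1)) (v 1))
    (hshort : ∀ (u : V) (c : H.Walk u u), c.IsCycle → Odd c.length → 2 * k + 1 ≤ c.length)
    (x : V) (hx : ∀ i, 1 ≤ i → i ≤ 2 * k + 1 → x ≠ v i)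
    [DecidablePred fun i => H.Adj x (v i)] :
    ((Finset.Icc 1 (2 * k + 1)).filter fun i => H.Adj x (v i)).card ≤ 2 := by
  -- the "wrapped" vertex function
  set w : ℕ → V := fun i => v (if i ≤ 2 * k + 1 then i else i - (2 * k + 1)) with hw
  have hw1 : ∀ i, i ≤ 2 * k + 1 → w i = v i := by
    intro i hi; simp [hw, hi]
  have hw2 : ∀ i, 2 * k + 1 < i → w i = v (i - (2 * k + 1)) := by
    intro i hi; simp [hw, Nat.not_le.mpr hi]
  have hwx : ∀ i, 1 ≤ i → i ≤ 4 * k + 2 → x ≠ w i := by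
    intro i h1 h2
    by_cases hi : i ≤ 2 * k + 1
    · rw [hw1 i hi]; exact hx i h1 hi
    · rw [hw2 i (by omega)]; exact hx _ (by omega) (by omega)
  have hwadj : ∀ i, 1 ≤ i → i ≤ 4 * k + 1 → H.Adj (w i) (w (i + 1)) := by
    intro i h1 h2
    by_cases hi : i ≤ 2 * k
    · rw [hw1 i (by omega), hw1 (i+1) (by omega)]; exact hadj i h1 hi
    · by_cases hi' : i = 2 * k + 1
      · subst hi'
        rw [hw1 _ le_rfl, hw2 (2*k+1+1) (by omega)]
        have : 2 * k + 1 + 1 - (2 * k + 1) = 1 := by omega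
        rw [this]; exact hclose
      · rw [hw2 i (by omega), hw2 (i+1) (by omega)]
        have h3 : i + 1 - (2 * k + 1) = (i - (2 * k + 1)) + 1 := by omega
        rw [h3]
        exact hadj _ (by omega) (by omega)
  have hwinj : ∀ i j, 1 ≤ i → i ≤ 4 * k + 2 → 1 ≤ j → j ≤ 4 * k + 2 →
      i + (2 * k + 1) ≠ j → j + (2 * k + 1) ≠ i → w i = w j → i = j := by
    intro i j h1 h2 h3 h4 h5 h6 heq
    by_cases hi : i ≤ 2 * k + 1 <;> by_cases hj : j ≤ 2 * k + 1
    · rw [hw1 i hi, hw1 j hj] at heq; exact hinj i j h1 hi h3 hj heq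
    · rw [hw1 i hi, hw2 j (by omega)] at heq
      have := hinj i (j - (2*k+1)) h1 hi (by omega) (by omega) heq; omega
    · rw [hw2 i (by omega), hw1 j hj] at heq
      have := hinj (i - (2*k+1)) j (by omega) (by omega) h3 hj heq; omega
    · rw [hw2 i (by omega), hw2 j (by omega)] at heq
      have := hinj (i - (2*k+1)) (j - (2*k+1)) (by omega) (by omega) (by omega) (by omega) heq
      omega
  -- build the walk along the cycle
  have hwalk : ∀ n p, 1 ≤ p → p + n ≤ 4 * k + 2 →
      ∃ W : H.Walk (w p) (w (p + n)), W.length = n ∧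
        W.support = (List.range (n + 1)).map (fun i => w (p + i)) := by
    intro n
    induction n with
    | zero => intro p h1 h2; exact ⟨Walk.nil.copy rfl (by norm_num), by simp, by simp [List.range_succ]⟩
    | succ n ih =>
      intro p h1 h2
      obtain ⟨W, hlen, hsup⟩ := ih (p + 1) (by omega) (by omega)
      have hadj1 : H.Adj (w p) (w (p + 1)) := hwadj p h1 (by omega)
      have hpn : p + 1 + n = p + (n + 1) := by omega
      refine ⟨(Walk.cons hadj1 W).copy rfl (by rw [hpn]), ?_, ?_⟩
      · simp [hlen]
      · have hlist : (List.range (n + 1 + 1)).map (fun i => w (p + i)) =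
            w p :: (List.range (n + 1)).map (fun i => w (p + 1 + i)) := by
          rw [List.range_succ_eq_map, List.map_cons, List.map_map]
          congr 1
          apply List.map_congr_left
          intro i _
          simp only [Function.comp_apply]
          congr 1
          omega
        rw [Walk.support_copy, Walk.support_cons, hsup, hlist]
  -- key lemma: odd arcs between neighbors of x are long
  have hkey : ∀ p q, 1 ≤ p → p < q → q ≤ 4 * k + 2 → q - p ≤ 2 * k →
      H.Adj x (w p) → H.Adj x (w q) → Odd (q - p) → 2 * k - 1 ≤ q - p := by
    intro p q h1 h2 h3 h4 hxp hxq hodd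
    obtain ⟨W0, hlen0, hsup0⟩ := hwalk (q - p) p h1 (by omega)
    have hpq : p + (q - p) = q := by omega
    set W : H.Walk (w p) (w q) := W0.copy rfl (congrArg w hpq) with hWdef
    have hlen : W.length = q - p := by rw [hWdef, Walk.length_copy]; exact hlen0
    have hsup : W.support = (List.range (q - p + 1)).map (fun i => w (p + i)) := by
      rw [hWdef, Walk.support_copy]; exact hsup0
    have hmem : ∀ y ∈ W.support, ∃ i, p ≤ i ∧ i ≤ q ∧ y = w i := by
      intro y hy
      rw [hsup] at hy
      obtain ⟨i, hi, rfl⟩ := List.mem_map.mp hy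
      rw [List.mem_range] at hi
      exact ⟨p + i, by omega, by omega, rfl⟩
    have hxW : x ∉ W.support := by
      intro hmem'
      obtain ⟨i, hi1, hi2, heq⟩ := hmem x hmem'
      exact hwx i (by omega) (by omega) heq
    have hWnodup : W.support.Nodup := by
      rw [hsup]
      apply List.Nodup.map_on _ List.nodup_range
      intro i hi j hj heq
      rw [List.mem_range] at hi hj
      have := hwinj (p + i) (p + j) (by omega) (by omega) (by omega) (by omega)
        (by omega) (by omega) heq
      omega
    set q2 : H.Walk (w p) x := W.concat hxq.symm with hq2
    have hq2path : q2.IsPath := by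
      rw [Walk.isPath_def, hq2, Walk.support_concat]
      rw [List.nodup_append]
      exact ⟨hWnodup, List.nodup_singleton x, by intro a ha b hb; simp at hb; subst hb; exact fun h => hxW (h ▸ ha)⟩
    have hedge : s(x, w p) ∉ q2.edges := by
      rw [hq2, Walk.edges_concat, List.concat_eq_append, List.mem_append]
      rintro (hmem' | hmem')
      · exact hxW (Walk.fst_mem_support_of_mem_edges W hmem')
      · simp only [List.mem_singleton, Sym2.eq, Sym2.rel_iff', Prod.mk.injEq, Prod.swap_prod_mk] at hmem'
        rcases hmem' with ⟨h5, h6⟩ | ⟨h5, h6⟩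
        · exact hwx q (by omega) (by omega) h5
        · have := hwinj p q (by omega) (by omega) (by omega) (by omega) (by omega) (by omega) h6
          omega
    set c : H.Walk x x := Walk.cons hxp q2 with hc
    have hcyc : c.IsCycle := (Walk.cons_isCycle_iff q2 hxp).mpr ⟨hq2path, hedge⟩
    have hclen : c.length = (q - p) + 2 := by
      rw [hc, Walk.length_cons, hq2, Walk.length_concat, hlen]
    have hcodd : Odd c.length := by
      rw [hclen]; rw [Nat.odd_iff] at hodd ⊢; omega
    have := hshort x c hcyc hcodd
    omega
  -- main combinatorial argument
  by_contra hcard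
  push_neg at hcard
  obtain ⟨a, b, c, ha, hb, hc, hab, hac, hbc⟩ := Finset.two_lt_card_iff.mp hcard
  simp only [Finset.mem_filter, Finset.mem_Icc] at ha hb hc
  -- reorder so that a < b < c
  obtain ⟨a, b, c, ha, hb, hc, hab, hbc⟩ :
      ∃ a b c, ((1 ≤ a ∧ a ≤ 2*k+1) ∧ H.Adj x (v a)) ∧ ((1 ≤ b ∧ b ≤ 2*k+1) ∧ H.Adj x (v b)) ∧
        ((1 ≤ c ∧ c ≤ 2*k+1) ∧ H.Adj x (v c)) ∧ a < b ∧ b < c := by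
    rcases Nat.lt_trichotomy a b with h | h | h
    · rcases Nat.lt_trichotomy b c with h' | h' | h'
      · exact ⟨a, b, c, ha, hb, hc, h, h'⟩
      · omega
      · rcases Nat.lt_trichotomy a c with h'' | h'' | h''
        · exact ⟨a, c, b, ha, hc, hb, h'', h'⟩
        · omega
        · exact ⟨c, a, b, hc, ha, hb, h'', h⟩
    · omega
    · rcases Nat.lt_trichotomy a c with h' | h' | h'
      · exact ⟨b, a, c, hb, ha, hc, h, h'⟩
      · omega
      · rcases Nat.lt_trichotomy b c with h'' | h'' | h''
        · exact ⟨b, c, a, hb, hc, ha, h'', h'⟩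
        · omega
        · exact ⟨c, b, a, hc, hb, ha, h'', h⟩
  obtain ⟨⟨ha1, ha2⟩, hxa⟩ := ha
  obtain ⟨⟨hb1, hb2⟩, hxb⟩ := hb
  obtain ⟨⟨hc1, hc2⟩, hxc⟩ := hc
  have hxa' : H.Adj x (w a) := by rw [hw1 a ha2]; exact hxa
  have hxb' : H.Adj x (w b) := by rw [hw1 b hb2]; exact hxb
  have hxc' : H.Adj x (w c) := by rw [hw1 c hc2]; exact hxc
  have hxa'' : H.Adj x (w (a + (2 * k + 1))) := by
    rw [hw2 _ (by omega)]
    have : a + (2 * k + 1) - (2 * k + 1) = a := by omega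
    rw [this]; exact hxa
  by_cases h1 : Odd (b - a)
  · have hba := hkey a b ha1 hab (by omega) (by omega) hxa' hxb' h1
    -- b - a ≤ 2k - 1 since a ≥ 1, b < c ≤ 2k+1
    have hba' : b - a = 2 * k - 1 := by omega
    have habc : a = 1 ∧ b = 2 * k ∧ c = 2 * k + 1 := by omega
    have h2 : Odd (c - b) := by rw [Nat.odd_iff]; omega
    have := hkey b c hb1 hbc (by omega) (by omega) hxb' hxc' h2
    omega
  · by_cases h2 : Odd (c - b)
    · have hcb := hkey b c hb1 hbc (by omega) (by omega) hxb' hxc' h2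
      -- c - b ≤ 2k - 1 since b ≥ a + 1 ≥ 2, c ≤ 2k+1; so b = 2, a = 1, b - a = 1 odd
      rw [Nat.odd_iff] at h1
      omega
    · -- both arcs even; wrap arc is odd
      rw [Nat.odd_iff] at h1 h2
      have h3 : Odd (a + (2 * k + 1) - c) := by rw [Nat.odd_iff]; omega
      have := hkey c (a + (2 * k + 1)) hc1 (by omega) (by omega) (by omega) hxc' hxa'' h3
      omega
end

section
/- Let H be a non-bipartite graph on n vertices and let C be a shortest odd cycle of H. Then the number of edges of H having at least one endpoint on C is at most 3n. -/
open SimpleGraph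

namespace EdgesMeetingAux

set_option linter.unusedSectionVars false

variable {V : Type*} [DecidableEq V] {H : SimpleGraph V}

private lemma getVert_takeUntil_length {a b z : V} (p : H.Walk a b) (hz : z ∈ p.support) :
    p.getVert ((p.takeUntil z hz).length) = z := by
  have h1 : ((p.takeUntil z hz).append (p.dropUntil z hz)).getVert
      ((p.takeUntil z hz).length) = z := by
    rw [Walk.getVert_append]
    simp
  rwa [p.take_spec hz] at h1

private lemma start_mem_support_tail {a : V} (p : H.Walk a a) (hp : ¬ p.Nil) :
    a ∈ p.support.tail := by
  cases p with
  | nil => simp at hp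
  | cons h q => simpa using q.end_mem_support

private lemma mem_support_rotate {a z : V} (c : H.Walk a a) (hp : ¬ c.Nil)
    {x : V} (hx : x ∈ c.support) (hz : z ∈ c.support) : z ∈ (c.rotate x hx).support := by
  have hrot := Walk.support_rotate c x hx
  have hzt : z ∈ c.support.tail := by
    rcases List.mem_cons.mp (by rwa [← Walk.support_eq_cons c] ) with rfl | h
    · exact start_mem_support_tail c hp
    · exact h
  exact List.mem_of_mem_tail (hrot.mem_iff.mpr hzt)

private lemma length_rotate {a x : V} (c : H.Walk a a) (hx : x ∈ c.support) :
    (c.rotate x hx).length = c.length := by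
  rw [Walk.rotate, Walk.length_append, add_comm, ← Walk.length_append, Walk.take_spec]

end EdgesMeetingAux

namespace EdgesMeetingAux

variable {V : Type*} [DecidableEq V] {H : SimpleGraph V}

private lemma length_eq_one_of_mem_edges' :
    ∀ {a b : V} (p : H.Walk a b), p.IsPath → s(a, b) ∈ p.edges → p.length = 1 := by
  intro a b p
  induction p with
  | nil => simp
  | @cons a c b h q ih =>
    intro hp he
    rw [Walk.edges_cons, List.mem_cons] at he
    rcases he with he | he
    · rw [Sym2.eq_iff] at he
      rcases he with ⟨-, rfl⟩ | ⟨rfl, -⟩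
      · have hq : q.IsPath := hp.of_cons
        rw [Walk.isPath_iff_eq_nil] at hq
        subst hq
        simp
      · exact absurd rfl h.ne
    · exact absurd (q.fst_mem_support_of_mem_edges he)
        ((Walk.cons_isPath_iff h q).mp hp).2

private lemma exists_odd_cycle (n : ℕ) :
    ∀ {v : V} (W : H.Walk v v), W.length = n → Odd n →
      ∃ (w : V) (c' : H.Walk w w), c'.IsCycle ∧ Odd c'.length ∧ c'.length ≤ n := by
  induction n using Nat.strong_induction_on with
  | _ n ih =>
    intro v W hlen hodd
    cases W with
    | nil =>
      simp only [Walk.length_nil] at hlen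
      rw [← hlen, Nat.odd_iff] at hodd
      omega
    | @cons _ w _ h R =>
      rw [Walk.length_cons] at hlen
      by_cases hnd : R.support.Nodup
      · have hR : R.IsPath := Walk.IsPath.mk' hnd
        by_cases he : s(v, w) ∈ R.edges
        · exfalso
          have h1 : R.length = 1 :=
            length_eq_one_of_mem_edges' R hR (by rwa [Sym2.eq_swap])
          rw [← hlen, Nat.odd_iff] at hodd
          omega
        · exact ⟨v, Walk.cons h R, (Walk.cons_isCycle_iff R h).mpr ⟨hR, he⟩,
            by rw [Walk.length_cons, hlen]; exact hodd, by rw [Walk.length_cons, hlen]⟩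
      · obtain ⟨x, hx⟩ := List.exists_duplicate_iff_not_nodup.mpr hnd
        have hx1 : x ∈ R.support := hx.mem
        have hcount : 2 ≤ R.support.count x := List.duplicate_iff_two_le_count.mp hx
        have hcnt1 : (R.takeUntil x hx1).support.count x = 1 :=
          R.count_support_takeUntil_eq_one hx1
        have hsup : R.support = (R.takeUntil x hx1).support
            ++ (R.dropUntil x hx1).support.tail := by
          rw [← Walk.support_append, R.take_spec hx1]
        have hx2 : x ∈ (R.dropUntil x hx1).support.tail := by
          by_contra hcon
          rw [hsup, List.count_append] at hcount
          rw [List.count_eq_zero.mpr hcon] at hcount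
          omega
        have hnn : ¬ (R.dropUntil x hx1).Nil := by
          intro hnil
          rw [Walk.nil_iff_support_eq] at hnil
          rw [hnil] at hx2
          simp at hx2
        obtain ⟨y, hadj2, R2, hdec⟩ := Walk.not_nil_iff.mp hnn
        have hx3 : x ∈ R2.support := by
          rw [hdec] at hx2
          simpa using hx2
        have hlenD : (R.takeUntil x hx1).length + (R.dropUntil x hx1).length = R.length := by
          rw [← Walk.length_append, R.take_spec hx1]
        have hlenD2 : (R2.takeUntil x hx3).length + (R2.dropUntil x hx3).length
            = R2.length := by
          rw [← Walk.length_append, R2.take_spec hx3]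
        have hlenR2 : R2.length + 1 = (R.dropUntil x hx1).length := by
          rw [hdec, Walk.length_cons]
        set M : H.Walk x x := Walk.cons hadj2 (R2.takeUntil x hx3) with hM
        set O : H.Walk v v :=
          Walk.cons h ((R.takeUntil x hx1).append (R2.dropUntil x hx3)) with hO
        have hMlen : M.length = (R2.takeUntil x hx3).length + 1 := by
          rw [hM, Walk.length_cons]
        have hOlen : O.length
            = (R.takeUntil x hx1).length + (R2.dropUntil x hx3).length + 1 := by
          rw [hO, Walk.length_cons, Walk.length_append]
        have hsum : M.length + O.length = n := by omega
        have hpar : Odd M.length ∨ Odd O.length := by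
          rw [Nat.odd_iff] at hodd ⊢
          rw [Nat.odd_iff]
          omega
        rcases hpar with hpm | hpo
        · obtain ⟨w', c', hc', ho', hle⟩ := ih M.length (by omega) M rfl hpm
          exact ⟨w', c', hc', ho', by omega⟩
        · obtain ⟨w', c', hc', ho', hle⟩ := ih O.length (by omega) O rfl hpo
          exact ⟨w', c', hc', ho', by omega⟩

private lemma neighbors_on_cycle_le [Fintype V] [DecidableRel H.Adj]
    {u : V} (c : H.Walk u u) (hc : c.IsCycle) (hodd : Odd c.length)
    (hshort : ∀ (w : V) (c' : H.Walk w w), c'.IsCycle → Odd c'.length →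
      c.length ≤ c'.length)
    (v : V) :
    ((c.support.toFinset).filter fun s => H.Adj v s).card ≤ 3 := by
  by_contra hkey
  push_neg at hkey
  set L := c.length with hL
  have hLodd : Odd L := hodd
  have hL3 : 3 ≤ L := hc.three_le_length
  have hcnil : ¬ c.Nil := Walk.not_nil_iff_lt_length.mpr (by omega)
  have hne : 0 < ((c.support.toFinset).filter fun s => H.Adj v s).card := by omega
  obtain ⟨x1, hx1m⟩ := Finset.card_pos.mp hne
  have hx1 : x1 ∈ c.support ∧ H.Adj v x1 := by
    have := Finset.mem_filter.mp hx1m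
    exact ⟨List.mem_toFinset.mp this.1, this.2⟩
  set d := c.rotate x1 hx1.1 with hd
  have hdlen : d.length = L := length_rotate c hx1.1
  have core : ∀ (x : V) (hxd : x ∈ d.support), H.Adj v x →
      1 ≤ (d.takeUntil x hxd).length → (d.takeUntil x hxd).length ≤ L - 1 →
      ((d.takeUntil x hxd).length = 2 ∨ (d.takeUntil x hxd).length = L - 2) := by
    intro x hxd hadj h1 h2
    by_contra hcon
    push_neg at hcon
    set t := (d.takeUntil x hxd).length with ht
    have hdrop : t + (d.dropUntil x hxd).length = L := by
      rw [ht, ← Walk.length_append, d.take_spec hxd, hdlen]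
    rcases Nat.even_or_odd t with hev | hto
    · -- t even, t ≥ 4 : walk v → x → (drop) → x1 → v of length (L - t) + 2
      set W : H.Walk v v := Walk.cons hadj ((d.dropUntil x hxd).concat hx1.2.symm) with hW
      have hWlen : W.length = (L - t) + 2 := by
        rw [hW, Walk.length_cons, Walk.length_concat]
        omega
      have hWodd : Odd W.length := by
        rw [hWlen, Nat.odd_iff]
        rw [Nat.odd_iff] at hLodd
        rw [Nat.even_iff] at hev
        omega
      obtain ⟨w', c', hc', ho', hle⟩ := exists_odd_cycle W.length W rfl hWodd
      have := hshort w' c' hc' ho'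
      rw [Nat.even_iff] at hev
      omega
    · -- t odd, t ≤ L - 3 : walk v → x1 → (take) → x → v of length t + 2
      set W : H.Walk v v := Walk.cons hx1.2 ((d.takeUntil x hxd).concat hadj.symm) with hW
      have hWlen : W.length = t + 2 := by
        rw [hW, Walk.length_cons, Walk.length_concat]
      have hWodd : Odd W.length := by
        rw [hWlen, Nat.odd_iff]
        rw [Nat.odd_iff] at hto
        omega
      obtain ⟨w', c', hc', ho', hle⟩ := exists_odd_cycle W.length W rfl hWodd
      have := hshort w' c' hc' ho'
      rw [Nat.odd_iff] at hto hLodd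
      omega
  -- now inject the erased filter set into {2, L-2}
  have hinj : (((c.support.toFinset).filter fun s => H.Adj v s).erase x1).card
      ≤ ({2, L - 2} : Finset ℕ).card := by
    apply Finset.card_le_card_of_injOn
      (fun z => if hz : z ∈ d.support then (d.takeUntil z hz).length else 0)
    · intro x hxe
      obtain ⟨hxne, hxf⟩ := Finset.mem_erase.mp hxe
      obtain ⟨hxS, hxadj⟩ := Finset.mem_filter.mp hxf
      have hxc : x ∈ c.support := List.mem_toFinset.mp hxS
      have hxd : x ∈ d.support := mem_support_rotate c hcnil hx1.1 hxc
      have hgv : d.getVert ((d.takeUntil x hxd).length) = x :=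
        getVert_takeUntil_length d hxd
      have hub : (d.takeUntil x hxd).length ≤ L := by
        have := Walk.length_takeUntil_le d hxd
        omega
      have hne0 : (d.takeUntil x hxd).length ≠ 0 := by
        intro h0
        rw [h0, Walk.getVert_zero] at hgv
        exact hxne hgv.symm
      have hneL : (d.takeUntil x hxd).length ≠ L := by
        intro hLL
        rw [hLL, ← hdlen, Walk.getVert_length] at hgv
        exact hxne hgv.symm
      have := core x hxd hxadj (by omega) (by omega)
      simp only [dif_pos hxd]
      rcases this with h | h
      · simp [h]
      · simp [h]
    · intro z1 hz1 z2 hz2 heq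
      simp only [Finset.coe_erase, Set.mem_diff, Finset.mem_coe] at hz1 hz2
      have hz1d : z1 ∈ d.support := mem_support_rotate c hcnil hx1.1
        (List.mem_toFinset.mp (Finset.mem_filter.mp hz1.1).1)
      have hz2d : z2 ∈ d.support := mem_support_rotate c hcnil hx1.1
        (List.mem_toFinset.mp (Finset.mem_filter.mp hz2.1).1)
      simp only [dif_pos hz1d, dif_pos hz2d] at heq
      have h1 := getVert_takeUntil_length d hz1d
      have h2 := getVert_takeUntil_length d hz2d
      rw [heq, h2] at h1
      exact h1.symm
  have hcard2 : ({2, L - 2} : Finset ℕ).card ≤ 2 := by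
    apply le_trans (Finset.card_insert_le _ _)
    simp
  have herase := Finset.card_erase_add_one hx1m
  omega

end EdgesMeetingAux


open SimpleGraph EdgesMeetingAux in
/-- Let `H` be a non-bipartite graph on `n` vertices and let `c` be a shortest odd cycle
of `H`.  Then the number of edges of `H` having at least one endpoint on `c` is at most
`3 * n`. -/
theorem edges_meeting_shortest_odd_cycle_le
    {V : Type*} [Fintype V] [DecidableEq V] (H : SimpleGraph V) [DecidableRel H.Adj]
    (hnb : ¬ H.Colorable 2)
    (u : V) (c : H.Walk u u) (hc : c.IsCycle) (hodd : Odd c.length)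
    (hshort : ∀ (w : V) (c' : H.Walk w w), c'.IsCycle → Odd c'.length →
      c.length ≤ c'.length) :
    (H.edgeFinset.filter fun e => ∃ w ∈ c.support, w ∈ e).card ≤ 3 * Fintype.card V := by
  classical
  set S : Finset V := c.support.toFinset with hS
  set T : Finset (V × V) := (Finset.univ ×ˢ S).filter (fun p => H.Adj p.1 p.2) with hT
  have h1 : (H.edgeFinset.filter fun e => ∃ w ∈ c.support, w ∈ e).card ≤ T.card := by
    apply Finset.card_le_card_of_surjOn (fun p => s(p.1, p.2))
    intro e he
    simp only [Finset.coe_filter, Set.mem_setOf_eq, Finset.mem_coe] at he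
    obtain ⟨heE, w, hw, hwe⟩ := he
    have hEdge : e ∈ H.edgeSet := SimpleGraph.mem_edgeFinset.mp heE
    have hspec : s(w, Sym2.Mem.other hwe) = e := Sym2.other_spec hwe
    have hadj : H.Adj w (Sym2.Mem.other hwe) := by
      rw [← SimpleGraph.mem_edgeSet, hspec]
      exact hEdge
    refine ⟨(Sym2.Mem.other hwe, w), ?_, ?_⟩
    · rw [Finset.mem_coe, hT, Finset.mem_filter, Finset.mem_product]
      exact ⟨⟨Finset.mem_univ _, List.mem_toFinset.mpr hw⟩, hadj.symm⟩
    · show s(Sym2.Mem.other hwe, w) = e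
      rw [Sym2.eq_swap]
      exact hspec
  have h2 : T.card = ∑ x : V, (S.filter fun s => H.Adj x s).card := by
    rw [Finset.card_eq_sum_card_fiberwise
      (f := Prod.fst) (t := Finset.univ) (fun p _ => Finset.mem_univ _)]
    apply Finset.sum_congr rfl
    intro x _
    have hfib : T.filter (fun p => p.1 = x) = {x} ×ˢ (S.filter fun s => H.Adj x s) := by
      ext ⟨a, b⟩
      simp only [hT, Finset.mem_filter, Finset.mem_product, Finset.mem_univ, true_and,
        Finset.mem_singleton]
      constructor
      · rintro ⟨⟨hb, hab⟩, rfl⟩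
        exact ⟨rfl, hb, hab⟩
      · rintro ⟨rfl, hb, hab⟩
        exact ⟨⟨hb, hab⟩, rfl⟩
    rw [hfib, Finset.card_product, Finset.card_singleton, one_mul]
  have h3 : ∀ x : V, (S.filter fun s => H.Adj x s).card ≤ 3 :=
    fun x => neighbors_on_cycle_le c hc hodd hshort x
  calc (H.edgeFinset.filter fun e => ∃ w ∈ c.support, w ∈ e).card
      ≤ T.card := h1
    _ = ∑ x : V, (S.filter fun s => H.Adj x s).card := h2
    _ ≤ ∑ _x : V, 3 := Finset.sum_le_sum (fun x _ => h3 x)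
    _ = 3 * Fintype.card V := by
        rw [Finset.sum_const, Finset.card_univ, smul_eq_mul, mul_comm]
end

section
/- Let G be a graph with a partition of its vertex set into V_S and V_D such that G[V_S] is bipartite and G[V_D] is co-bipartite. Let S* be a set of vertices with G[S*] bipartite that is a (2c+1)-local optimum for c = 4, meaning: there is no set S' with |S* ∖ S'| ≤ 4, |S' ∖ S*| = |S* ∖ S'| + 1, and G[S'] bipartite. Then |S*| ≥ |V_S|. -/
open SimpleGraph

/-- `s` is an independent set of `G`. -/
def IndepOn {V : Type*} (G : SimpleGraph V) (s : Set V) : Prop :=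
  s.Pairwise fun a b => ¬ G.Adj a b

/-- The induced subgraph `G[s]` is bipartite: `s` partitions into two independent sets. -/
def BipartiteOn {V : Type*} (G : SimpleGraph V) (s : Set V) : Prop :=
  ∃ X Y : Set V, X ∪ Y = s ∧ Disjoint X Y ∧ IndepOn G X ∧ IndepOn G Y

/-- The induced subgraph `G[s]` is co-bipartite: `s` partitions into two cliques. -/
def CobipartiteOn {V : Type*} (G : SimpleGraph V) (s : Set V) : Prop :=
  ∃ Q₁ Q₂ : Set V, Q₁ ∪ Q₂ = s ∧ Disjoint Q₁ Q₂ ∧ G.IsClique Q₁ ∧ G.IsClique Q₂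

/-!
The two cliques of `G[V_D]` each meet each of the two independent sets of a bipartition of
`G[S*]` in at most one vertex, so at most four vertices of `S*` lie outside `V_S`. If `S*` were
smaller than `V_S`, swapping those vertices for one more vertex of `V_S ∖ S*` would give a larger
subset of `V_S`, hence a bipartite set reachable by an allowed local move.
-/

lemma ncard_le_of_forall_not_exchange {α : Type*} [Finite α] {p : Set α → Prop}
    (hp : Antitone p) {S B : Set α} {c : ℕ} (hB : p B) (hSB : (S \ B).ncard ≤ c)
    (hopt : ¬ ∃ S' : Set α, (S \ S').ncard ≤ c ∧
      (S' \ S).ncard = (S \ S').ncard + 1 ∧ p S') :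
    B.ncard ≤ S.ncard := by
  by_contra! hlt
  have hroom : (S \ B).ncard + 1 ≤ (B \ S).ncard :=
    (Set.ncard_lt_ncard_iff_ncard_sdiff_lt_ncard_sdiff).1 hlt
  obtain ⟨T, hT, hTcard⟩ := Set.exists_subset_card_eq hroom
  have hTS : Disjoint T S := Set.disjoint_of_subset_left hT Set.disjoint_sdiff_left
  have hremoved : S \ (S ∩ B ∪ T) = S \ B := by
    rw [← Set.sdiff_sdiff, Set.sdiff_self_inter,
      (hTS.symm.mono_left Set.sdiff_subset).sdiff_eq_left]
  have hadded : (S ∩ B ∪ T) \ S = T := by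
    rw [Set.union_sdiff_distrib, Set.sdiff_eq_empty.2 Set.inter_subset_left, Set.empty_union,
      hTS.sdiff_eq_left]
  refine hopt ⟨S ∩ B ∪ T, ?_, ?_, hp (Set.union_subset Set.inter_subset_right
    (hT.trans Set.sdiff_subset)) hB⟩
  · rwa [hremoved]
  · rw [hremoved, hadded, hTcard]

lemma BipartiteOn.antitone {V : Type*} (G : SimpleGraph V) : Antitone (BipartiteOn G) := by
  rintro s t hst ⟨X, Y, hXY, hd, hX, hY⟩
  refine ⟨X ∩ s, Y ∩ s, ?_, hd.mono Set.inter_subset_left Set.inter_subset_left,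
    hX.mono Set.inter_subset_left, hY.mono Set.inter_subset_left⟩
  rw [← Set.union_inter_distrib_right, hXY, Set.inter_eq_right.2 hst]

lemma SimpleGraph.IsClique.ncard_inter_le_one {V : Type*} [Finite V] {G : SimpleGraph V}
    {Q X : Set V} (hQ : G.IsClique Q) (hX : IndepOn G X) : (Q ∩ X).ncard ≤ 1 := by
  refine (Set.ncard_le_one_iff).2 fun {a b} ha hb => ?_
  by_contra hab
  exact hX ha.2 hb.2 hab (hQ ha.1 hb.1 hab)

lemma BipartiteOn.ncard_inter_clique_le_two {V : Type*} [Finite V] {G : SimpleGraph V}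
    {s Q : Set V} (hs : BipartiteOn G s) (hQ : G.IsClique Q) : (Q ∩ s).ncard ≤ 2 := by
  obtain ⟨X, Y, rfl, -, hX, hY⟩ := hs
  calc (Q ∩ (X ∪ Y)).ncard = ((Q ∩ X) ∪ (Q ∩ Y)).ncard := by rw [Set.inter_union_distrib_left]
    _ ≤ (Q ∩ X).ncard + (Q ∩ Y).ncard := Set.ncard_union_le _ _
    _ ≤ 1 + 1 := add_le_add (hQ.ncard_inter_le_one hX) (hQ.ncard_inter_le_one hY)

lemma BipartiteOn.ncard_inter_le_four {V : Type*} [Finite V] {G : SimpleGraph V}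
    {s t : Set V} (hs : BipartiteOn G s) (ht : CobipartiteOn G t) : (s ∩ t).ncard ≤ 4 := by
  obtain ⟨Q₁, Q₂, rfl, -, hQ₁, hQ₂⟩ := ht
  calc (s ∩ (Q₁ ∪ Q₂)).ncard = ((Q₁ ∩ s) ∪ (Q₂ ∩ s)).ncard := by
        rw [Set.inter_union_distrib_left, Set.inter_comm s, Set.inter_comm s]
    _ ≤ (Q₁ ∩ s).ncard + (Q₂ ∩ s).ncard := Set.ncard_union_le _ _
    _ ≤ 2 + 2 :=
        add_le_add (hs.ncard_inter_clique_le_two hQ₁) (hs.ncard_inter_clique_le_two hQ₂)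

theorem local_optimum_ge_sparse_side_general {V : Type*} [Fintype V] (G : SimpleGraph V)
    (VS VD : Set V)
    (hpart : VS ∪ VD = Set.univ)
    (hS : BipartiteOn G VS) (hD : CobipartiteOn G VD)
    (Sstar : Set V) (hSstar : BipartiteOn G Sstar)
    (hopt : ¬ ∃ S' : Set V, (Sstar \ S').ncard ≤ 4 ∧
      (S' \ Sstar).ncard = (Sstar \ S').ncard + 1 ∧ BipartiteOn G S') :
    VS.ncard ≤ Sstar.ncard := by
  have houtside : Sstar \ VS ⊆ Sstar ∩ VD := fun v hv =>
    ⟨hv.1, ((Set.mem_union v VS VD).1 (hpart ▸ Set.mem_univ v)).resolve_left hv.2⟩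
  exact ncard_le_of_forall_not_exchange (BipartiteOn.antitone G) hS
    ((Set.ncard_le_ncard houtside).trans (hSstar.ncard_inter_le_four hD)) hopt

/-- Let `(V_S, V_D)` be a sparse–dense partition of `G` (bipartite/co-bipartite), and let
`S*` induce a bipartite subgraph and be a `(2c+1)`-local optimum for `c = 4`: there is no
`S'` obtained from `S*` by removing at most `4` vertices and adding one more vertex than
was removed such that `G[S']` is bipartite.  Then `|S*| ≥ |V_S|`. -/
theorem local_optimum_ge_sparse_side {V : Type*} [Fintype V] (G : SimpleGraph V)
    (VS VD : Set V)
    (hpart : VS ∪ VD = Set.univ) (hdisj : Disjoint VS VD)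
    (hS : BipartiteOn G VS) (hD : CobipartiteOn G VD)
    (Sstar : Set V) (hSstar : BipartiteOn G Sstar)
    (hopt : ¬ ∃ S' : Set V, (Sstar \ S').ncard ≤ 4 ∧
      (S' \ Sstar).ncard = (Sstar \ S').ncard + 1 ∧ BipartiteOn G S') :
    VS.ncard ≤ Sstar.ncard :=
  local_optimum_ge_sparse_side_general G VS VD hpart hS hD Sstar hSstar hopt
end

section
/- Suppose a graph G is a (2,2)-graph with sparse–dense partition (B*, C*), i.e., G[B*] bipartite and G[C*] co-bipartite. Define B^F as the set of vertices v such that G[N(v)] is a (1,2)-graph but G[V ∖ N[v]] is not a (2,1)-graph, and C^F as the set of vertices v such that G[N(v)] is not a (1,2)-graph but G[V ∖ N[v]] is a (2,1)-graph. Then B^F ⊆ B* and C^F ⊆ C*. -/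
open SimpleGraph

/-- `G[s]` is a `(1,2)`-graph: `s` partitions into one independent set and two cliques. -/
def OneTwoOn {V : Type*} (G : SimpleGraph V) (s : Set V) : Prop :=
  ∃ I Q₁ Q₂ : Set V, I ∪ Q₁ ∪ Q₂ = s ∧ Disjoint I Q₁ ∧ Disjoint I Q₂ ∧ Disjoint Q₁ Q₂ ∧
    IndepOn G I ∧ G.IsClique Q₁ ∧ G.IsClique Q₂

/-- `G[s]` is a `(2,1)`-graph: `s` partitions into two independent sets and one clique. -/
def TwoOneOn {V : Type*} (G : SimpleGraph V) (s : Set V) : Prop :=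
  ∃ I₁ I₂ Q : Set V, I₁ ∪ I₂ ∪ Q = s ∧ Disjoint I₁ I₂ ∧ Disjoint I₁ Q ∧ Disjoint I₂ Q ∧
    IndepOn G I₁ ∧ IndepOn G I₂ ∧ G.IsClique Q

/-!
A vertex `v` of the dense part lies in one of its two cliques, so every non-neighbour of `v`
lies in the bipartite part or in the other clique: `G[V ∖ N[v]]` is a `(2,1)`-graph. Dually, a
vertex of the sparse part has no neighbour in its own colour class, so `G[N(v)]` is a
`(1,2)`-graph. Each condition defining `B^F` and `C^F` therefore rules out one of the parts.
-/

section

variable {V : Type*} {G : SimpleGraph V} {s t : Set V}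

lemma IndepOn.mono (ht : IndepOn G t) (hst : s ⊆ t) : IndepOn G s :=
  Set.Pairwise.mono hst ht

lemma IndepOn.neighborSet_subset_compl {v : V} (hs : IndepOn G s) (hv : v ∈ s) :
    G.neighborSet v ⊆ sᶜ :=
  fun _ hu hus => hs hv hus (G.ne_of_adj hu) hu

lemma SimpleGraph.IsClique.compl_neighborSet_union_singleton_subset {v : V} (hs : G.IsClique s)
    (hv : v ∈ s) : (G.neighborSet v ∪ {v})ᶜ ⊆ sᶜ := by
  intro u hu hus
  by_cases huv : u = v
  · exact hu (Or.inr huv)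
  · exact hu (Or.inl (hs hv hus (Ne.symm huv)))

lemma OneTwoOn.mono (ht : OneTwoOn G t) (hst : s ⊆ t) : OneTwoOn G s := by
  obtain ⟨I, Q₁, Q₂, hcover, hIQ₁, hIQ₂, hQ₁Q₂, hI, hQ₁, hQ₂⟩ := ht
  refine ⟨I ∩ s, Q₁ ∩ s, Q₂ ∩ s, ?_, hIQ₁.mono Set.inter_subset_left Set.inter_subset_left,
    hIQ₂.mono Set.inter_subset_left Set.inter_subset_left,
    hQ₁Q₂.mono Set.inter_subset_left Set.inter_subset_left, hI.mono Set.inter_subset_left,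
    hQ₁.subset Set.inter_subset_left, hQ₂.subset Set.inter_subset_left⟩
  rw [← Set.union_inter_distrib_right, ← Set.union_inter_distrib_right, hcover,
    Set.inter_eq_right.mpr hst]

lemma TwoOneOn.mono (ht : TwoOneOn G t) (hst : s ⊆ t) : TwoOneOn G s := by
  obtain ⟨I₁, I₂, Q, hcover, hI₁I₂, hI₁Q, hI₂Q, hI₁, hI₂, hQ⟩ := ht
  refine ⟨I₁ ∩ s, I₂ ∩ s, Q ∩ s, ?_, hI₁I₂.mono Set.inter_subset_left Set.inter_subset_left,
    hI₁Q.mono Set.inter_subset_left Set.inter_subset_left,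
    hI₂Q.mono Set.inter_subset_left Set.inter_subset_left, hI₁.mono Set.inter_subset_left,
    hI₂.mono Set.inter_subset_left, hQ.subset Set.inter_subset_left⟩
  rw [← Set.union_inter_distrib_right, ← Set.union_inter_distrib_right, hcover,
    Set.inter_eq_right.mpr hst]

lemma IndepOn.oneTwoOn_union (hs : IndepOn G s) (ht : CobipartiteOn G t) :
    OneTwoOn G (s ∪ t) := by
  obtain ⟨Q₁, Q₂, rfl, hQ₁Q₂, hQ₁, hQ₂⟩ := ht
  refine ⟨s \ (Q₁ ∪ Q₂), Q₁, Q₂, ?_, Set.disjoint_sdiff_left.mono_right Set.subset_union_left,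
    Set.disjoint_sdiff_left.mono_right Set.subset_union_right, hQ₁Q₂, hs.mono Set.sdiff_subset,
    hQ₁, hQ₂⟩
  rw [Set.union_assoc, Set.sdiff_union_self]

lemma BipartiteOn.twoOneOn_union (hs : BipartiteOn G s) (ht : G.IsClique t) :
    TwoOneOn G (s ∪ t) := by
  obtain ⟨X, Y, rfl, hXY, hX, hY⟩ := hs
  refine ⟨X \ t, Y \ t, t, ?_, hXY.mono Set.sdiff_subset Set.sdiff_subset, Set.disjoint_sdiff_left,
    Set.disjoint_sdiff_left, hX.mono Set.sdiff_subset, hY.mono Set.sdiff_subset, ht⟩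
  rw [← Set.union_sdiff_distrib, Set.sdiff_union_self]

end

section

variable {V : Type*} {G : SimpleGraph V} {B C : Set V}

lemma oneTwoOn_neighborSet_of_mem_sparse (hcover : B ∪ C = Set.univ) (hB : BipartiteOn G B)
    (hC : CobipartiteOn G C) {v : V} (hv : v ∈ B) : OneTwoOn G (G.neighborSet v) := by
  obtain ⟨X, Y, rfl, -, hX, hY⟩ := hB
  rcases hv with hv | hv
  · refine (hY.oneTwoOn_union hC).mono ((hX.neighborSet_subset_compl hv).trans ?_)
    rwa [Set.compl_subset_iff_union, ← Set.union_assoc]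
  · refine (hX.oneTwoOn_union hC).mono ((hY.neighborSet_subset_compl hv).trans ?_)
    rwa [Set.compl_subset_iff_union, Set.union_left_comm, ← Set.union_assoc]

lemma twoOneOn_compl_of_mem_dense (hcover : B ∪ C = Set.univ) (hB : BipartiteOn G B)
    (hC : CobipartiteOn G C) {v : V} (hv : v ∈ C) :
    TwoOneOn G (G.neighborSet v ∪ {v})ᶜ := by
  obtain ⟨Q₁, Q₂, rfl, -, hQ₁, hQ₂⟩ := hC
  rcases hv with hv | hv
  · refine (hB.twoOneOn_union hQ₂).mono
      ((hQ₁.compl_neighborSet_union_singleton_subset hv).trans ?_)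
    rwa [Set.compl_subset_iff_union, Set.union_left_comm]
  · refine (hB.twoOneOn_union hQ₁).mono
      ((hQ₂.compl_neighborSet_union_singleton_subset hv).trans ?_)
    rwa [Set.compl_subset_iff_union, Set.union_left_comm, Set.union_comm Q₂]

end

theorem forced_vertices_subset_general {V : Type*} (G : SimpleGraph V)
    (Bstar Cstar : Set V)
    (hpart : Bstar ∪ Cstar = Set.univ)
    (hB : BipartiteOn G Bstar) (hC : CobipartiteOn G Cstar) :
    {v : V | OneTwoOn G (G.neighborSet v) ∧
        ¬ TwoOneOn G (G.neighborSet v ∪ {v})ᶜ} ⊆ Bstar ∧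
      {v : V | ¬ OneTwoOn G (G.neighborSet v) ∧
        TwoOneOn G (G.neighborSet v ∪ {v})ᶜ} ⊆ Cstar := by
  have hmem (v : V) : v ∈ Bstar ∪ Cstar := hpart ▸ Set.mem_univ v
  constructor
  · rintro v ⟨-, hnot⟩
    exact (hmem v).resolve_right
      fun hv => hnot (twoOneOn_compl_of_mem_dense hpart hB hC hv)
  · rintro v ⟨hnot, -⟩
    exact (hmem v).resolve_left
      fun hv => hnot (oneTwoOn_neighborSet_of_mem_sparse hpart hB hC hv)

/-- If `(B*, C*)` is a sparse–dense partition of `G`, then the set `B^F` of vertices `v`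
with `G[N(v)]` a `(1,2)`-graph but `G[V ∖ N[v]]` not a `(2,1)`-graph is contained in
`B*`, and the set `C^F` of vertices with the opposite behavior is contained in `C*`. -/
theorem forced_vertices_subset {V : Type*} (G : SimpleGraph V)
    (Bstar Cstar : Set V)
    (hpart : Bstar ∪ Cstar = Set.univ) (hdisj : Disjoint Bstar Cstar)
    (hB : BipartiteOn G Bstar) (hC : CobipartiteOn G Cstar) :
    {v : V | OneTwoOn G (G.neighborSet v) ∧
        ¬ TwoOneOn G (G.neighborSet v ∪ {v})ᶜ} ⊆ Bstar ∧
      {v : V | ¬ OneTwoOn G (G.neighborSet v) ∧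
        TwoOneOn G (G.neighborSet v ∪ {v})ᶜ} ⊆ Cstar :=
  forced_vertices_subset_general G Bstar Cstar hpart hB hC
end
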